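/- The spectral norm of Q_L(x) for x ∈ M with dual part x_d = (x₂,x₃) equals √(1 + (1/2)(‖x_d‖² + √(‖x_d‖²(‖x_d‖²+4)))). -/
import Mathlib
set_option maxHeartbeats 1000000
open Matrix
noncomputable def QL (x : Fin 4 → ℝ) : Matrix (Fin 4) (Fin 4) ℝ :=
  !![x 0, -x 1, 0, 0;
     x 1,  x 0, 0, 0;
     x 2,  x 3, x 0, -x 1;
     x 3, -x 2, x 1,  x 0]

lemma euc_norm_sq4 (w : EuclideanSpace ℝ (Fin 4)) :
    ‖w‖ ^ 2 = w 0 ^ 2 + w 1 ^ 2 + w 2 ^ 2 + w 3 ^ 2 := by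
  rw [EuclideanSpace.norm_eq, Real.sq_sqrt (by positivity)]
  simp [Fin.sum_univ_four, sq_abs]

lemma QL_apply_normsq (x : Fin 4 → ℝ) (v : EuclideanSpace ℝ (Fin 4)) :
    ‖Matrix.toEuclideanCLM (𝕜 := ℝ) (QL x) v‖ ^ 2 =
      (x 0 * v 0 - x 1 * v 1) ^ 2 + (x 1 * v 0 + x 0 * v 1) ^ 2 +
      (x 2 * v 0 + x 3 * v 1 + x 0 * v 2 - x 1 * v 3) ^ 2 +
      (x 3 * v 0 - x 2 * v 1 + x 1 * v 2 + x 0 * v 3) ^ 2 := by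
  rw [euc_norm_sq4]
  have h : ∀ i, (Matrix.toEuclideanCLM (𝕜 := ℝ) (QL x) v) i
      = ((QL x).mulVec (fun j => v j)) i := fun i => rfl
  rw [h 0, h 1, h 2, h 3]
  simp [QL, Matrix.mulVec, dotProduct, Fin.sum_univ_four]
  ring

lemma euc_mk_apply (f : Fin 4 → ℝ) (i : Fin 4) :
    ((WithLp.equiv 2 (Fin 4 → ℝ)).symm f) i = f i := rfl

lemma cross_bound (p q α β K : ℝ) (hp : 0 ≤ p) (hq : 0 ≤ q) (hα : 0 ≤ α) (hβ : 0 ≤ β)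
    (hK : K ^ 2 ≤ (p * q) * (α * β)) : 2 * K ≤ p * α + q * β := by
  have hsum : 0 ≤ p * α + q * β := by positivity
  nlinarith [sq_nonneg (p * α - q * β), hK, hsum, sq_nonneg (p * α + q * β - 2 * K)]

lemma alg_upper (x0 x1 x2 x3 a b c d lam : ℝ) (hx : x0 ^ 2 + x1 ^ 2 = 1)
    (hp : 0 ≤ lam - 1 - (x2 ^ 2 + x3 ^ 2)) (hq : 0 ≤ lam - 1)
    (hpq : (lam - 1 - (x2 ^ 2 + x3 ^ 2)) * (lam - 1) = x2 ^ 2 + x3 ^ 2) :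
    (x0 * a - x1 * b) ^ 2 + (x1 * a + x0 * b) ^ 2 +
      (x2 * a + x3 * b + x0 * c - x1 * d) ^ 2 +
      (x3 * a - x2 * b + x1 * c + x0 * d) ^ 2 ≤
      lam * (a ^ 2 + b ^ 2 + c ^ 2 + d ^ 2) := by
  have huw : (x0 * x2 + x1 * x3) ^ 2 + (x0 * x3 - x1 * x2) ^ 2 = x2 ^ 2 + x3 ^ 2 := by
    linear_combination (x2 ^ 2 + x3 ^ 2) * hx
  have hKid : (x2 ^ 2 + x3 ^ 2) * ((a ^ 2 + b ^ 2) * (c ^ 2 + d ^ 2)) -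
      ((x0 * x2 + x1 * x3) * (a * c - b * d) +
        (x0 * x3 - x1 * x2) * (a * d + b * c)) ^ 2 =
      ((x0 * x2 + x1 * x3) * (a * d + b * c) -
        (x0 * x3 - x1 * x2) * (a * c - b * d)) ^ 2 := by
    linear_combination (-((a * c - b * d) ^ 2 + (a * d + b * c) ^ 2)) * huw
  have hKsq' : ((x0 * x2 + x1 * x3) * (a * c - b * d) +
      (x0 * x3 - x1 * x2) * (a * d + b * c)) ^ 2 ≤
      ((lam - 1 - (x2 ^ 2 + x3 ^ 2)) * (lam - 1)) * ((a ^ 2 + b ^ 2) * (c ^ 2 + d ^ 2)) := by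
    rw [hpq]
    linarith [hKid, sq_nonneg ((x0 * x2 + x1 * x3) * (a * d + b * c) -
      (x0 * x3 - x1 * x2) * (a * c - b * d))]
  have hcross := cross_bound _ _ _ _ _ hp hq (by positivity : (0:ℝ) ≤ a ^ 2 + b ^ 2)
    (by positivity : (0:ℝ) ≤ c ^ 2 + d ^ 2) hKsq'
  have hid2 : (x0 * a - x1 * b) ^ 2 + (x1 * a + x0 * b) ^ 2 +
      (x2 * a + x3 * b + x0 * c - x1 * d) ^ 2 +
      (x3 * a - x2 * b + x1 * c + x0 * d) ^ 2 =
      (1 + (x2 ^ 2 + x3 ^ 2)) * (a ^ 2 + b ^ 2) + (c ^ 2 + d ^ 2) +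
      2 * ((x0 * x2 + x1 * x3) * (a * c - b * d) +
        (x0 * x3 - x1 * x2) * (a * d + b * c)) := by
    linear_combination (a ^ 2 + b ^ 2 + c ^ 2 + d ^ 2) * hx
  rw [hid2]
  linarith [hcross]

theorem QL_spectral_norm_eq (x : Fin 4 → ℝ) (hx : x 0 ^ 2 + x 1 ^ 2 = 1) :
    ‖Matrix.toEuclideanCLM (𝕜 := ℝ) (QL x)‖ =
      Real.sqrt (1 + (1 / 2) * ((x 2 ^ 2 + x 3 ^ 2) +
        Real.sqrt ((x 2 ^ 2 + x 3 ^ 2) * ((x 2 ^ 2 + x 3 ^ 2) + 4)))) := by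
  set t := x 2 ^ 2 + x 3 ^ 2 with ht_def
  have ht : 0 ≤ t := by positivity
  set σ := Real.sqrt (t * (t + 4)) with hσ_def
  have hσ0 : 0 ≤ σ := Real.sqrt_nonneg _
  have hσ2 : σ ^ 2 = t * (t + 4) := Real.sq_sqrt (by positivity)
  have hσt : t ≤ σ := by nlinarith
  set lam : ℝ := 1 + 1 / 2 * (t + σ) with hlam_def
  have hlam1 : 1 ≤ lam := by rw [hlam_def]; nlinarith
  have hlam0 : 0 ≤ lam := by linarith
  have hpq : (lam - 1 - t) * (lam - 1) = t := by
    rw [hlam_def]; ring_nf; linear_combination (1/4 : ℝ) * hσ2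
  have hp : 0 ≤ lam - 1 - t := by rw [hlam_def]; nlinarith
  have hq : 0 ≤ lam - 1 := by linarith
  have key : ∀ v : EuclideanSpace ℝ (Fin 4),
      ‖Matrix.toEuclideanCLM (𝕜 := ℝ) (QL x) v‖ ^ 2 ≤ lam * ‖v‖ ^ 2 := by
    intro v
    rw [QL_apply_normsq, euc_norm_sq4]
    exact alg_upper (x 0) (x 1) (x 2) (x 3) (v 0) (v 1) (v 2) (v 3) lam hx hp hq hpq
  -- witness
  obtain ⟨v, hv0, hAv⟩ : ∃ v : EuclideanSpace ℝ (Fin 4), 0 < ‖v‖ ∧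
      ‖Matrix.toEuclideanCLM (𝕜 := ℝ) (QL x) v‖ ^ 2 = lam * ‖v‖ ^ 2 := by
    rcases eq_or_lt_of_le ht with h0 | hpos
    · -- t = 0
      have hσz : σ = 0 := by
        rw [hσ_def, ← h0]; simp
      have hlam_one : lam = 1 := by rw [hlam_def, ← h0, hσz]; ring
      refine ⟨(WithLp.equiv 2 (Fin 4 → ℝ)).symm ![0, 0, 1, 0], ?_, ?_⟩
      · have : ‖(WithLp.equiv 2 (Fin 4 → ℝ)).symm ![0, 0, 1, 0]‖ ^ 2 = (1 : ℝ) := by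
          rw [euc_norm_sq4]
          simp only [euc_mk_apply, Matrix.cons_val_zero, Matrix.cons_val_one, Matrix.head_cons,
            Matrix.cons_val_two, Matrix.tail_cons, Matrix.cons_val_three]
          norm_num
        nlinarith [norm_nonneg ((WithLp.equiv 2 (Fin 4 → ℝ)).symm ![(0:ℝ), 0, 1, 0])]
      · rw [QL_apply_normsq, euc_norm_sq4, hlam_one]
        simp only [euc_mk_apply, Matrix.cons_val_zero, Matrix.cons_val_one, Matrix.head_cons,
          Matrix.cons_val_two, Matrix.tail_cons, Matrix.cons_val_three]
        norm_num
        linarith [hx]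
    · -- t > 0
      have hlt : (lam - 1) ^ 2 = lam * t := by
        rw [hlam_def]; ring_nf; linear_combination (1/4 : ℝ) * hσ2
      set u : ℝ := x 0 * x 2 + x 1 * x 3 with hu_def
      set w : ℝ := x 0 * x 3 - x 1 * x 2 with hw_def
      refine ⟨(WithLp.equiv 2 (Fin 4 → ℝ)).symm ![lam - 1, 0, u, w], ?_, ?_⟩
      · have hnsq : ‖(WithLp.equiv 2 (Fin 4 → ℝ)).symm ![lam - 1, 0, u, w]‖ ^ 2
            = (lam - 1) ^ 2 + t := by
          rw [euc_norm_sq4]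
          simp only [euc_mk_apply, Matrix.cons_val_zero, Matrix.cons_val_one, Matrix.head_cons,
            Matrix.cons_val_two, Matrix.tail_cons, Matrix.cons_val_three]
          rw [hu_def, hw_def, ht_def]
          linear_combination (x 2 ^ 2 + x 3 ^ 2) * hx
        have h1 : (0:ℝ) < (lam - 1) ^ 2 + t := by positivity
        nlinarith [norm_nonneg ((WithLp.equiv 2 (Fin 4 → ℝ)).symm ![lam - 1, 0, u, w])]
      · rw [QL_apply_normsq, euc_norm_sq4]
        simp only [euc_mk_apply, Matrix.cons_val_zero, Matrix.cons_val_one, Matrix.head_cons,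
          Matrix.cons_val_two, Matrix.tail_cons, Matrix.cons_val_three]
        rw [hu_def, hw_def]
        linear_combination ((lam - 1) ^ 2 + (x 2 ^ 2 + x 3 ^ 2) * (2 * lam - 1 + x 0 ^ 2 + x 1 ^ 2)
          - lam * (x 2 ^ 2 + x 3 ^ 2)) * hx + (1 - lam) * hlt
  -- conclude
  have hAv_eq : ‖Matrix.toEuclideanCLM (𝕜 := ℝ) (QL x) v‖ = Real.sqrt lam * ‖v‖ := by
    have : ‖Matrix.toEuclideanCLM (𝕜 := ℝ) (QL x) v‖
        = Real.sqrt (‖Matrix.toEuclideanCLM (𝕜 := ℝ) (QL x) v‖ ^ 2) :=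
      (Real.sqrt_sq (norm_nonneg _)).symm
    rw [this, hAv, Real.sqrt_mul hlam0, Real.sqrt_sq (norm_nonneg _)]
  apply le_antisymm
  · apply ContinuousLinearMap.opNorm_le_bound _ (Real.sqrt_nonneg _)
    intro v'
    have h1 := key v'
    calc ‖Matrix.toEuclideanCLM (𝕜 := ℝ) (QL x) v'‖
        = Real.sqrt (‖Matrix.toEuclideanCLM (𝕜 := ℝ) (QL x) v'‖ ^ 2) :=
          (Real.sqrt_sq (norm_nonneg _)).symm
      _ ≤ Real.sqrt (lam * ‖v'‖ ^ 2) := Real.sqrt_le_sqrt h1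
      _ = Real.sqrt lam * ‖v'‖ := by
          rw [Real.sqrt_mul hlam0, Real.sqrt_sq (norm_nonneg _)]
  · have h2 := (Matrix.toEuclideanCLM (𝕜 := ℝ) (QL x)).le_opNorm v
    rw [hAv_eq] at h2
    exact le_of_mul_le_mul_right h2 hv0
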